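/- arXiv:2504.21790 — 2 statements merged into one kernel-verified Lean document; each statement's English description precedes it below -/
import Mathlib

section
/- Let R be a reduced root system with positive roots R⁺, let χ be a linear functional with Z(χ) = {α ∈ R⁺ : χ(α) = 0}, let α ∈ Z(χ) and β ∈ P(χ) with ⟨β, α∨⟩ < 0. For any Weyl group element w with R(w) ∩ Z(χ) = ∅ (where R(w) is the inversion set of w): if w(s_α(β)) is a negative root, then w(β) is a negative root. -/
open scoped Classical

/-- A reduced root system in a real vector space, with a fixed positive system
determined by a set of simple roots. -/
structure RootSystemData (V : Type*) [AddCommGroup V] [Module ℝ V] where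
  /-- the set of roots -/
  R : Set V
  /-- the coroot attached to each root, viewed as a linear functional -/
  coroot : V → V →ₗ[ℝ] ℝ
  /-- the set of positive roots -/
  pos : Set V
  /-- the set of simple roots -/
  simple : Set V
  finite : R.Finite
  pos_subset : pos ⊆ R
  simple_subset : simple ⊆ pos
  root_ne_zero : ∀ α ∈ R, α ≠ 0
  coroot_self : ∀ α ∈ R, coroot α α = 2
  neg_mem : ∀ α ∈ R, -α ∈ R
  pos_or_neg : ∀ α ∈ R, α ∈ pos ∨ -α ∈ pos
  not_both : ∀ α ∈ R, α ∈ pos → -α ∉ pos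
  reduced : ∀ α ∈ R, (2 : ℝ) • α ∉ R
  reflect_mem : ∀ α ∈ R, ∀ β ∈ R, β - coroot α β • α ∈ R
  simple_reflect_pos : ∀ α ∈ simple, ∀ β ∈ pos, β ≠ α → β - coroot α β • α ∈ pos
  pos_combo : ∀ β ∈ pos, ∃ f : V →₀ ℝ,
    ↑f.support ⊆ simple ∧ (∀ γ, 0 ≤ f γ) ∧ β = f.sum fun γ k => k • γ

namespace RootSystemData

variable {V : Type*} [AddCommGroup V] [Module ℝ V]

/-- The reflection `s_α` applied to `β`: `s_α(β) = β − ⟨β, α∨⟩ α`. -/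
def reflect (P : RootSystemData V) (α β : V) : V := β - P.coroot α β • α

end RootSystemData

/-!
Write `k = -⟨β, α∨⟩ > 0`, so that `-w(β) = -w(s_α β) + k w(α)`. Here `w(α)` is positive because
`α ∈ Z(χ)` is not inverted by `w`, so `-w(β)` is a root that is a positive combination of two
positive roots, hence a positive root.

That last step needs a linear functional that is positive on every positive root. Take an inner
product `B` on the span of the roots that is invariant under the finite group of automorphisms
preserving the roots (by averaging), and `ρ` the sum of the positive roots. Invariance under `s_α`
together with `⟨ρ, α∨⟩ = 2` gives `B(ρ, α) = B(α, α) > 0` for every simple root `α`, and positive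
roots are nonnegative combinations of simple roots.
-/

open scoped Pointwise

section InvariantForm

variable {M : Type*} [AddCommGroup M] [Module ℝ M]

lemma finite_stabilizer_of_span_eq_top {S : Set M} (hS : S.Finite)
    (hspan : Submodule.span ℝ S = ⊤) : Finite (MulAction.stabilizer (M ≃ₗ[ℝ] M) S) := by
  have := hS.to_subtype
  refine Finite.of_injective (fun g (x : S) => (⟨g.1 x, ?_⟩ : S)) fun g h hgh => ?_
  · have hg : g.1 • S = S := g.2
    have hx : g.1 • x.1 ∈ g.1 • S := Set.smul_mem_smul_set x.2
    rwa [hg] at hx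
  · refine Subtype.ext (LinearEquiv.toLinearMap_injective (LinearMap.ext_on hspan fun x hx => ?_))
    exact congrArg Subtype.val (congrFun hgh ⟨x, hx⟩)

lemma exists_bilinForm_pos [FiniteDimensional ℝ M] :
    ∃ B : LinearMap.BilinForm ℝ M, ∀ x ≠ 0, 0 < B x x := by
  let e : M ≃ₗ[ℝ] EuclideanSpace ℝ (Fin (Module.finrank ℝ M)) :=
    (Module.finBasis ℝ M).equivFun.trans (WithLp.linearEquiv 2 ℝ _).symm
  refine ⟨(innerₗ _).compl₁₂ e.toLinearMap e.toLinearMap, fun x hx => ?_⟩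
  simp only [LinearMap.compl₁₂_apply, LinearEquiv.coe_coe, innerₗ_apply_apply]
  exact real_inner_self_pos.mpr (e.map_ne_zero_iff.mpr hx)

lemma exists_invariant_bilinForm_pos [FiniteDimensional ℝ M] (G : Subgroup (M ≃ₗ[ℝ] M))
    [Finite G] : ∃ B : LinearMap.BilinForm ℝ M,
      (∀ x ≠ 0, 0 < B x x) ∧ ∀ g ∈ G, ∀ x y, B (g x) (g y) = B x y := by
  have := Fintype.ofFinite G
  obtain ⟨B₀, hB₀⟩ := exists_bilinForm_pos (M := M)
  refine ⟨∑ g : G, B₀.compl₁₂ (g : M →ₗ[ℝ] M) (g : M →ₗ[ℝ] M), fun x hx => ?_, fun h hh x y => ?_⟩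
  · simp only [LinearMap.BilinForm.sum_apply, LinearMap.compl₁₂_apply]
    exact Finset.sum_pos (fun g _ => hB₀ _ (g.1.map_ne_zero_iff.mpr hx)) Finset.univ_nonempty
  · simp only [LinearMap.BilinForm.sum_apply, LinearMap.compl₁₂_apply]
    exact Fintype.sum_equiv (Equiv.mulRight ⟨h, hh⟩) _ _ fun g => rfl

lemma two_mul_apply_eq_of_reflection_invariant (B : LinearMap.BilinForm ℝ M) (f : M →ₗ[ℝ] ℝ)
    {a : M} (ha : f a = 2) (x : M) (hB : B (x - f x • a) (a - f a • a) = B x a) :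
    2 * B x a = f x * B a a := by
  rw [ha, two_smul, sub_add_cancel_left] at hB
  simp only [map_sub, map_smul, LinearMap.sub_apply, LinearMap.smul_apply, map_neg,
    smul_eq_mul] at hB
  linarith

end InvariantForm

namespace RootSystemData

variable {V : Type*} [AddCommGroup V] [Module ℝ V] (P : RootSystemData V)

lemma reflect_reflect {α : V} (hα : α ∈ P.R) (x : V) : P.reflect α (P.reflect α x) = x := by
  simp only [reflect, map_sub, map_smul, P.coroot_self α hα, smul_eq_mul, sub_smul, mul_smul]
  module

lemma reflect_self {α : V} (hα : α ∈ P.R) : P.reflect α α = -α := by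
  rw [reflect, P.coroot_self α hα, two_smul, sub_add_cancel_left]

lemma reflect_mem_pos_of_simple {α : V} (hα : α ∈ P.simple) {x : V} (hx : x ∈ P.pos)
    (hxα : x ≠ α) : P.reflect α x ∈ P.pos ∧ P.reflect α x ≠ α := by
  have hαR : α ∈ P.R := P.pos_subset (P.simple_subset hα)
  refine ⟨P.simple_reflect_pos α hα x hx hxα, fun h => ?_⟩
  have hx' : x = -α := by rw [← P.reflect_reflect hαR x, h, P.reflect_self hαR]
  exact P.not_both α hαR (P.simple_subset hα) (hx' ▸ hx)

noncomputable def posFinset : Finset V := (P.finite.subset P.pos_subset).toFinset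

lemma mem_posFinset {x : V} : x ∈ P.posFinset ↔ x ∈ P.pos := by
  simp [posFinset]

noncomputable def rho : V := ∑ γ ∈ P.posFinset, γ

lemma coroot_rho {α : V} (hα : α ∈ P.simple) : P.coroot α P.rho = 2 := by
  have hαR : α ∈ P.R := P.pos_subset (P.simple_subset hα)
  have hmem : α ∈ P.posFinset := P.mem_posFinset.mpr (P.simple_subset hα)
  have hmaps : ∀ γ ∈ P.posFinset.erase α, P.reflect α γ ∈ P.posFinset.erase α := by
    intro γ hγ
    rw [Finset.mem_erase, P.mem_posFinset] at hγ ⊢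
    exact (P.reflect_mem_pos_of_simple hα hγ.2 hγ.1).symm
  have hperm : ∑ γ ∈ P.posFinset.erase α, P.reflect α γ = ∑ γ ∈ P.posFinset.erase α, γ :=
    Finset.sum_nbij' _ _ hmaps hmaps (fun γ _ => P.reflect_reflect hαR γ)
      (fun γ _ => P.reflect_reflect hαR γ) fun _ _ => rfl
  have hsum : ∑ γ ∈ P.posFinset, P.reflect α γ = P.rho - (2 : ℝ) • α := by
    rw [← Finset.add_sum_erase _ _ hmem, hperm, P.reflect_self hαR, rho,
      ← Finset.add_sum_erase _ _ hmem, two_smul]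
    abel
  have hlin : ∑ γ ∈ P.posFinset, P.reflect α γ = P.rho - P.coroot α P.rho • α := by
    simp only [reflect, Finset.sum_sub_distrib, ← Finset.sum_smul, rho, map_sum]
  rw [hsum, sub_right_inj] at hlin
  exact smul_left_injective ℝ (P.root_ne_zero α hαR) hlin.symm

noncomputable def rootSpan : Submodule ℝ V := Submodule.span ℝ P.R

def rootsIn : Set P.rootSpan := Subtype.val ⁻¹' P.R

lemma rootsIn_finite : P.rootsIn.Finite :=
  P.finite.preimage Subtype.val_injective.injOn

lemma span_rootsIn : Submodule.span ℝ P.rootsIn = ⊤ :=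
  Submodule.span_span_coe_preimage

noncomputable def reflectionRootSpan {α : V} (hα : α ∈ P.R) : P.rootSpan ≃ₗ[ℝ] P.rootSpan :=
  LinearEquiv.ofInvolutive
    ((LinearMap.id - (P.coroot α).smulRight α).restrict fun _ hx =>
      sub_mem hx (P.rootSpan.smul_mem _ (Submodule.subset_span hα)))
    fun x => Subtype.ext (P.reflect_reflect hα x)

lemma reflectionRootSpan_smul_rootsIn {α : V} (hα : α ∈ P.R) :
    P.reflectionRootSpan hα • P.rootsIn = P.rootsIn := by
  have hmaps : ∀ y ∈ P.rootsIn, P.reflectionRootSpan hα y ∈ P.rootsIn :=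
    fun y hy => P.reflect_mem α hα y hy
  refine Set.Subset.antisymm ?_ fun y hy => ?_
  · rintro _ ⟨y, hy, rfl⟩
    exact hmaps y hy
  · exact ⟨_, hmaps y hy, Subtype.ext (P.reflect_reflect hα y)⟩

lemma exists_linearMap_pos_of_mem_simple : ∃ φ : V →ₗ[ℝ] ℝ, ∀ α ∈ P.simple, 0 < φ α := by
  have : FiniteDimensional ℝ P.rootSpan := FiniteDimensional.span_of_finite ℝ P.finite
  let G := MulAction.stabilizer (P.rootSpan ≃ₗ[ℝ] P.rootSpan) P.rootsIn
  have : Finite G := finite_stabilizer_of_span_eq_top P.rootsIn_finite P.span_rootsIn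
  obtain ⟨B, hpos, hinv⟩ := exists_invariant_bilinForm_pos G
  let ρ : P.rootSpan := ⟨P.rho, Submodule.sum_mem _ fun γ hγ =>
    Submodule.subset_span (P.pos_subset (P.mem_posFinset.mp hγ))⟩
  obtain ⟨φ, hφ⟩ := LinearMap.exists_extend (B ρ)
  refine ⟨φ, fun α hα => ?_⟩
  have hαR : α ∈ P.R := P.pos_subset (P.simple_subset hα)
  let a : P.rootSpan := ⟨α, Submodule.subset_span hαR⟩
  have ha0 : a ≠ 0 := fun h => P.root_ne_zero α hαR (congrArg Subtype.val h)
  have h2 := two_mul_apply_eq_of_reflection_invariant B (P.coroot α ∘ₗ P.rootSpan.subtype)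
    (a := a) (P.coroot_self α hαR) ρ (hinv _ (P.reflectionRootSpan_smul_rootsIn hαR) ρ a)
  have hφα : φ α = B ρ a := LinearMap.congr_fun hφ a
  simp only [LinearMap.comp_apply, Submodule.subtype_apply, ρ, P.coroot_rho hα] at h2
  linarith [hpos a ha0]

lemma exists_linearMap_pos_of_mem_pos : ∃ φ : V →ₗ[ℝ] ℝ, ∀ γ ∈ P.pos, 0 < φ γ := by
  obtain ⟨φ, hφ⟩ := P.exists_linearMap_pos_of_mem_simple
  refine ⟨φ, fun γ hγ => ?_⟩
  obtain ⟨f, hsupp, hnn, rfl⟩ := P.pos_combo γ hγ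
  have hne : f.support.Nonempty := by
    rw [Finset.nonempty_iff_ne_empty, Ne, Finsupp.support_eq_empty]
    rintro rfl
    exact P.root_ne_zero _ (P.pos_subset hγ) Finsupp.sum_zero_index
  simp only [Finsupp.sum, map_sum, map_smul, smul_eq_mul]
  exact Finset.sum_pos (fun i hi => mul_pos ((hnn i).lt_of_ne' (Finsupp.mem_support_iff.mp hi))
    (hφ i (hsupp hi))) hne

lemma add_smul_mem_pos {p q : V} (hp : p ∈ P.pos) (hq : q ∈ P.pos) {m : ℝ} (hm : 0 < m)
    (hR : p + m • q ∈ P.R) : p + m • q ∈ P.pos := by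
  obtain ⟨φ, hφ⟩ := P.exists_linearMap_pos_of_mem_pos
  refine (P.pos_or_neg _ hR).resolve_right fun hneg => ?_
  have := hφ _ hneg
  rw [map_neg, map_add, map_smul, smul_eq_mul] at this
  linarith [hφ p hp, mul_pos hm (hφ q hq)]

end RootSystemData

theorem neg_of_reflect_neg_general {V : Type*} [AddCommGroup V] [Module ℝ V]
    (P : RootSystemData V) (χ : V →ₗ[ℝ] ℝ)
    (α : V) (hα : α ∈ P.pos) (hχα : χ α = 0)
    (β : V) (hβ : β ∈ P.R)
    (hpair : P.coroot α β < 0)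
    (w : V ≃ₗ[ℝ] V) (hwR : ∀ γ ∈ P.R, w γ ∈ P.R)
    (hinv : ∀ γ ∈ P.pos, χ γ = 0 → w γ ∈ P.pos) :
    -(w (P.reflect α β)) ∈ P.pos → -(w β) ∈ P.pos := by
  intro h
  have hwβ : -(w β) = -(w (P.reflect α β)) + (-P.coroot α β) • w α := by
    simp only [RootSystemData.reflect, map_sub, map_smul]
    module
  rw [hwβ]
  exact P.add_smul_mem_pos h (hinv α hα hχα) (neg_pos.mpr hpair) (hwβ ▸ P.neg_mem _ (hwR β hβ))

/-- let `α ∈ Z(χ)` (a positive root with `χ(α) = 0`) and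
`β ∈ P(χ)` with `⟨β, α∨⟩ < 0`.  For any root-preserving `w` whose inversion
set avoids `Z(χ)` (i.e. `w` sends every positive root killed by `χ` to a
positive root): if `w(s_α(β))` is a negative root then `w(β)` is a negative
root. -/
theorem neg_of_reflect_neg {V : Type*} [AddCommGroup V] [Module ℝ V]
    (P : RootSystemData V) (c : V → ℝ) (χ : V →ₗ[ℝ] ℝ)
    (α : V) (hα : α ∈ P.pos) (hχα : χ α = 0)
    (β : V) (hβ : β ∈ P.R) (hβP : χ β = c β)
    (hpair : P.coroot α β < 0)
    (w : V ≃ₗ[ℝ] V) (hwR : ∀ γ ∈ P.R, w γ ∈ P.R)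
    (hinv : ∀ γ ∈ P.pos, χ γ = 0 → w γ ∈ P.pos) :
    -(w (P.reflect α β)) ∈ P.pos → -(w β) ∈ P.pos :=
  neg_of_reflect_neg_general P χ α hα hχα β hβ hpair w hwR hinv
end

section
/- Let ℍ be a graded Hecke algebra and IM the Iwahori–Matsumoto involution determined by IM(v) = −v for v ∈ V and IM(t_w) = (−1)^{ℓ(w)} t_w for w ∈ W. Then for any I ⊆ Δ and any ℍ_I-module U, there is an isomorphism of ℍ-modules IM(ℍ ⊗_{ℍ_I} U) ≅ ℍ ⊗_{ℍ_I} IM_I(U), where IM_I is the Iwahori–Matsumoto involution of ℍ_I. -/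
universe u v w

noncomputable section

/-- The combinatorial data underlying a graded Hecke algebra `ℍ(V, R, Δ, c)`:
the reflection group `W` with its reflection representation `ρ` on `V`,
simple reflections `s i` with simple roots `a i`, simple coroots `acov i`
(as linear functionals), and a parameter function `c`. -/
structure HeckeData (V : Type v) [AddCommGroup V] [Module ℂ V]
    (W : Type w) [Group W] (n : ℕ) where
  /-- the simple reflections -/
  s : Fin n → W
  /-- the simple roots -/
  a : Fin n → V
  /-- the simple coroots, as linear functionals on `V` -/
  acov : Fin n → V →ₗ[ℂ] ℂ
  /-- the parameter function on simple roots -/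
  c : Fin n → ℂ
  /-- the reflection representation of `W` on `V` -/
  ρ : W → V ≃ₗ[ℂ] V
  ρ_one : ∀ v : V, ρ 1 v = v
  ρ_mul : ∀ (g h : W) (v : V), ρ (g * h) v = ρ g (ρ h v)
  ρ_s : ∀ (i : Fin n) (v : V), ρ (s i) v = v - acov i v • a i
  acov_a : ∀ i, acov i (a i) = 2
  s_order : ∀ i, s i * s i = 1
  gen : Subgroup.closure (Set.range s) = ⊤

namespace HeckeData

variable {V : Type v} [AddCommGroup V] [Module ℂ V]
variable {W : Type w} [Group W] {n : ℕ}

/-- The parabolic subgroup `W_I` for `I ⊆ Δ`. -/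
def WI (D : HeckeData V W n) (I : Set (Fin n)) : Subgroup W :=
  Subgroup.closure (D.s '' I)

/-- A module over the graded Hecke algebra `ℍ`, presented as a pair of an
action `Θ` of the generators `t_w` and a commuting linear action `π` of
`V ⊆ S(V)`, subject to the cross relation
`t_{s_α} v − s_α(v) t_{s_α} = c_α ⟨v, α∨⟩`. -/
def IsMod (D : HeckeData V W n) {M : Type u} [AddCommGroup M] [Module ℂ M]
    (Θ : W → Module.End ℂ M) (π : V → Module.End ℂ M) : Prop :=
  Θ 1 = 1 ∧
  (∀ g h : W, Θ (g * h) = Θ g * Θ h) ∧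
  (∀ v u : V, π (v + u) = π v + π u) ∧
  (∀ (r : ℂ) (v : V), π (r • v) = r • π v) ∧
  (∀ v u : V, π v * π u = π u * π v) ∧
  (∀ (i : Fin n) (v : V),
    Θ (D.s i) * π v - π (D.ρ (D.s i) v) * Θ (D.s i) = (D.c i * D.acov i v) • 1)

/-- A module over the parabolic subalgebra `ℍ_I`: only the values of `Θ` on
`W_I` are constrained, and the cross relation is imposed for `i ∈ I`. -/
def IsModI (D : HeckeData V W n) (I : Set (Fin n))
    {M : Type u} [AddCommGroup M] [Module ℂ M]
    (Θ : W → Module.End ℂ M) (π : V → Module.End ℂ M) : Prop :=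
  Θ 1 = 1 ∧
  (∀ g ∈ D.WI I, ∀ h ∈ D.WI I, Θ (g * h) = Θ g * Θ h) ∧
  (∀ v u : V, π (v + u) = π v + π u) ∧
  (∀ (r : ℂ) (v : V), π (r • v) = r • π v) ∧
  (∀ v u : V, π v * π u = π u * π v) ∧
  (∀ i ∈ I, ∀ v : V,
    Θ (D.s i) * π v - π (D.ρ (D.s i) v) * Θ (D.s i) = (D.c i * D.acov i v) • 1)

/-- `(M, Θ, π)` is the induced module `ℍ ⊗_{ℍ_I} U`, presented by its
universal property: `ι : U → M` is `ℍ_I`-equivariant, and every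
`ℍ_I`-morphism from `U` to an `ℍ`-module factors uniquely through `ι` as an
`ℍ`-morphism. -/
def IsInduced (D : HeckeData V W n) (I : Set (Fin n))
    {U : Type u} [AddCommGroup U] [Module ℂ U]
    {M : Type u} [AddCommGroup M] [Module ℂ M]
    (ΘU : W → Module.End ℂ U) (πU : V → Module.End ℂ U)
    (Θ : W → Module.End ℂ M) (π : V → Module.End ℂ M)
    (ι : U →ₗ[ℂ] M) : Prop :=
  (∀ g ∈ D.WI I, ∀ u : U, Θ g (ι u) = ι (ΘU g u)) ∧
  (∀ (v : V) (u : U), π v (ι u) = ι (πU v u)) ∧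
  ∀ (Y : Type u) [AddCommGroup Y] [Module ℂ Y],
    ∀ (ΘY : W → Module.End ℂ Y) (πY : V → Module.End ℂ Y), D.IsMod ΘY πY →
    ∀ f : U →ₗ[ℂ] Y,
      (∀ g ∈ D.WI I, ∀ u : U, ΘY g (f u) = f (ΘU g u)) →
      (∀ (v : V) (u : U), πY v (f u) = f (πU v u)) →
      ∃! F : M →ₗ[ℂ] Y,
        (∀ (w : W) (x : M), F (Θ w x) = ΘY w (F x)) ∧
        (∀ (v : V) (x : M), F (π v x) = πY v (F x)) ∧
        ∀ u : U, F (ι u) = f u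

end HeckeData
open HeckeData


section Aux

variable {V : Type v} [AddCommGroup V] [Module ℂ V]
variable {W : Type w} [Group W] {n : ℕ}

lemma sgn_sq (D : HeckeData V W n) (sgn : W → ℂ) (hsgn1 : sgn 1 = 1)
    (hsgnmul : ∀ g h, sgn (g * h) = sgn g * sgn h)
    (hsgns : ∀ i, sgn (D.s i) = -1) : ∀ g : W, sgn g * sgn g = 1 := by
  intro g
  have hg : g ∈ Subgroup.closure (Set.range D.s) := by
    rw [D.gen]; exact Subgroup.mem_top g
  induction hg using Subgroup.closure_induction with
  | mem x hx =>
    obtain ⟨i, rfl⟩ := hx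
    rw [hsgns]; ring
  | one => rw [hsgn1]; ring
  | mul x y _ _ hx hy =>
    rw [hsgnmul]
    calc sgn x * sgn y * (sgn x * sgn y) = (sgn x * sgn x) * (sgn y * sgn y) := by ring
    _ = 1 := by rw [hx, hy]; ring
  | inv x _ hx =>
    have h : sgn x⁻¹ * sgn x = 1 := by rw [← hsgnmul, inv_mul_cancel, hsgn1]
    have : sgn x⁻¹ = sgn x := by
      calc sgn x⁻¹ = sgn x⁻¹ * (sgn x * sgn x) := by rw [hx, mul_one]
      _ = (sgn x⁻¹ * sgn x) * sgn x := by ring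
      _ = sgn x := by rw [h, one_mul]
    rw [this, hx]

lemma twist_IsMod (D : HeckeData V W n) (sgn : W → ℂ) (hsgn1 : sgn 1 = 1)
    (hsgnmul : ∀ g h, sgn (g * h) = sgn g * sgn h)
    (hsgns : ∀ i, sgn (D.s i) = -1)
    {Y : Type u} [AddCommGroup Y] [Module ℂ Y]
    (ΘY : W → Module.End ℂ Y) (πY : V → Module.End ℂ Y) (hY : D.IsMod ΘY πY) :
    D.IsMod (fun w => sgn w • ΘY w) (fun v => -πY v) := by
  obtain ⟨h1, h2, h3, h4, h5, h6⟩ := hY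
  refine ⟨by simp [hsgn1, h1], ?_, ?_, ?_, ?_, ?_⟩
  · intro g h
    simp only [hsgnmul, h2, smul_mul_assoc, mul_smul_comm, smul_smul]
    ring_nf
  · intro v u; simp only [h3, neg_add_rev]; abel
  · intro r v; simp [h4]
  · intro v u; simpa using h5 v u
  · intro i v
    have := h6 i v
    simp only [hsgns, neg_smul, one_smul, neg_mul, mul_neg, neg_neg, sub_neg_eq_add,
      neg_neg] at *
    linear_combination (norm := module) this

end Aux

/-- the Iwahori–Matsumoto involution (`IM(v) = −v`,
`IM(t_w) = (−1)^{ℓ(w)} t_w`, so that the twist of a module `(Θ, π)` is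
`(w ↦ (−1)^{ℓ(w)}Θ w, v ↦ −π v)`, where `(−1)^{ℓ(·)}` is the sign character
`sgn`) commutes with parabolic induction:
`IM(ℍ ⊗_{ℍ_I} U) ≅ ℍ ⊗_{ℍ_I} IM_I(U)`, via the same unit map `ι`. -/
theorem IM_of_induced
    {V : Type v} [AddCommGroup V] [Module ℂ V]
    {W : Type w} [Group W] {n : ℕ} (D : HeckeData V W n) (I : Set (Fin n))
    {U : Type u} [AddCommGroup U] [Module ℂ U]
    {X : Type u} [AddCommGroup X] [Module ℂ X]
    (ΘU : W → Module.End ℂ U) (πU : V → Module.End ℂ U)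
    (hU : D.IsModI I ΘU πU)
    (ΘX : W → Module.End ℂ X) (πX : V → Module.End ℂ X)
    (hX : D.IsMod ΘX πX)
    (ι : U →ₗ[ℂ] X) (hind : D.IsInduced I ΘU πU ΘX πX ι)
    (sgn : W → ℂ) (hsgn1 : sgn 1 = 1) (hsgnmul : ∀ g h, sgn (g * h) = sgn g * sgn h)
    (hsgns : ∀ i, sgn (D.s i) = -1) :
    D.IsMod (fun w => sgn w • ΘX w) (fun v => -πX v) ∧
    D.IsInduced I (fun g => sgn g • ΘU g) (fun v => -πU v)
      (fun w => sgn w • ΘX w) (fun v => -πX v) ι := by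
  have hsq := sgn_sq D sgn hsgn1 hsgnmul hsgns
  have hXtw := twist_IsMod D sgn hsgn1 hsgnmul hsgns ΘX πX hX
  refine ⟨hXtw, ?_, ?_, ?_⟩
  · intro g hg u
    simp only [LinearMap.smul_apply, hind.1 g hg u, map_smul]
  · intro v u
    simp only [LinearMap.neg_apply, hind.2.1 v u, map_neg]
  · intro Y _ _ ΘY πY hY f hf1 hf2
    have hYtw := twist_IsMod D sgn hsgn1 hsgnmul hsgns ΘY πY hY
    have hf1' : ∀ g ∈ D.WI I, ∀ u : U, (sgn g • ΘY g) (f u) = f (ΘU g u) := by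
      intro g hg u
      have := hf1 g hg u
      simp only [LinearMap.smul_apply, map_smul] at this ⊢
      rw [this, smul_smul, hsq, one_smul]
    have hf2' : ∀ (v : V) (u : U), (-πY v) (f u) = f (πU v u) := by
      intro v u
      have := hf2 v u
      simp only [LinearMap.neg_apply, map_neg] at this ⊢
      rw [this, neg_neg]
    obtain ⟨F, ⟨hFΘ, hFπ, hFι⟩, hFuniq⟩ :=
      hind.2.2 Y (fun w => sgn w • ΘY w) (fun v => -πY v) hYtw f hf1' hf2'
    refine ⟨F, ⟨?_, ?_, hFι⟩, ?_⟩
    · intro w x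
      simp only [map_smul, hFΘ w x, LinearMap.smul_apply, smul_smul, hsq, one_smul]
    · intro v x
      have := hFπ v x
      simp only [LinearMap.neg_apply, map_neg] at this ⊢
      rw [this, neg_neg]
    · intro F' ⟨hF'Θ, hF'π, hF'ι⟩
      apply hFuniq
      refine ⟨?_, ?_, hF'ι⟩
      · intro w x
        have := hF'Θ w x
        simp only [LinearMap.smul_apply, map_smul] at this ⊢
        rw [← this, smul_smul, hsq, one_smul]
      · intro v x
        have := hF'π v x
        simp only [LinearMap.neg_apply, map_neg] at this ⊢
        rw [← this, neg_neg]
end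
end
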